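/- The redistribution scheme is collision-free: let p nodes hold x_v elements each with ∑_v x_v ≤ p², set y_v = ∑_{u: id(u) < id(v)} x_u, and let node v send its i-th element (1 ≤ i ≤ x_v) to the node with id ((i + y_v) mod p). Then each node receives at most ⌈(∑_v x_v)/p⌉ elements, and for each ordered pair of nodes (v, w), node v sends at most ⌈x_v/p⌉ ≤ p·⌈x_v/p⌉/p elements to w; in particular if x_v ≤ p for all v, each node sends at most one element to each other node. -/
import Mathlib

private lemma count_residue_le (p n c r : ℕ) (hp : 0 < p) :
    ((Finset.Icc 1 n).filter fun i => (i + c) % p = r).card ≤ (n + p - 1) / p := by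
  classical
  rcases Nat.eq_zero_or_pos n with rfl | hn
  · simp
  have hinj : ∀ i ∈ (Finset.Icc 1 n).filter fun i => (i + c) % p = r,
      ∀ j ∈ (Finset.Icc 1 n).filter fun i => (i + c) % p = r,
      i ≤ j → (i - 1) / p = (j - 1) / p → i = j := by
    intro i hi j hj hij hdiv
    simp only [Finset.mem_filter, Finset.mem_Icc] at hi hj
    have hmod : Nat.ModEq p i j := by
      have : Nat.ModEq p (i + c) (j + c) := hi.2.trans hj.2.symm
      exact Nat.ModEq.add_right_cancel' c this
    have hdvd : p ∣ j - i := (Nat.modEq_iff_dvd' hij).mp hmod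
    have e1 := Nat.div_add_mod (i - 1) p
    have e2 := Nat.div_add_mod (j - 1) p
    rw [← hdiv] at e2
    have m1 := Nat.mod_lt (i - 1) hp
    have m2 := Nat.mod_lt (j - 1) hp
    have hlt : j - i < p := by omega
    have := Nat.eq_zero_of_dvd_of_lt hdvd hlt
    omega
  have hmaps : ∀ i ∈ (Finset.Icc 1 n).filter fun i => (i + c) % p = r,
      (i - 1) / p ∈ Finset.range ((n + p - 1) / p) := by
    intro i hi
    simp only [Finset.mem_filter, Finset.mem_Icc] at hi
    simp only [Finset.mem_range]
    have h1 : (i - 1) / p ≤ (n - 1) / p := Nat.div_le_div_right (by omega)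
    have h2 : (n + p - 1) / p = (n - 1) / p + 1 := by
      have : n + p - 1 = (n - 1) + p := by omega
      rw [this, Nat.add_div_right _ hp]
    omega
  calc ((Finset.Icc 1 n).filter fun i => (i + c) % p = r).card
      ≤ (Finset.range ((n + p - 1) / p)).card := by
        apply Finset.card_le_card_of_injOn (fun i => (i - 1) / p) hmaps
        intro a ha b hb hab
        rcases le_total a b with h | h
        · exact hinj a ha b hb h hab
        · exact (hinj b hb a ha h hab.symm).symm
    _ = (n + p - 1) / p := Finset.card_range _

/-- the redistribution scheme is collision-free.  `p` nodes
(with ids `0, …, p-1`) hold `x v` elements each, `∑ v, x v ≤ p²`; node `v`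
sends its `i`-th element (`1 ≤ i ≤ x v`) to the node with id
`(i + y v) % p`, where `y v = ∑_{u < v} x u`.  Then:
* each node receives at most `⌈(∑ v, x v)/p⌉` elements;
* each node `v` sends at most `⌈x v / p⌉` elements to any fixed node `w`;
* in particular, if `x v ≤ p` for all `v`, each node sends at most one
  element to each node. -/
theorem redistribution_collision_free (p : ℕ) (hp : 0 < p)
    (x : Fin p → ℕ) (htotal : ∑ v, x v ≤ p ^ 2)
    (y : Fin p → ℕ)
    (hy : ∀ v, y v = ∑ u ∈ Finset.univ.filter (fun u : Fin p => u < v), x u) :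
    (∀ w : Fin p,
        ∑ v, ((Finset.Icc 1 (x v)).filter fun i => (i + y v) % p = w.val).card
          ≤ ((∑ v, x v) + p - 1) / p) ∧
    (∀ v w : Fin p,
        ((Finset.Icc 1 (x v)).filter fun i => (i + y v) % p = w.val).card
          ≤ (x v + p - 1) / p) ∧
    ((∀ v, x v ≤ p) → ∀ v w : Fin p,
        ((Finset.Icc 1 (x v)).filter fun i => (i + y v) % p = w.val).card ≤ 1) := by
  classical
  have hmono : ∀ v w : Fin p, v < w → y v + x v ≤ y w := by
    intro v w hvw
    rw [hy, hy]
    have hnot : v ∉ Finset.univ.filter (fun u : Fin p => u < v) := by simp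
    have hsub : insert v (Finset.univ.filter (fun u : Fin p => u < v))
        ⊆ Finset.univ.filter (fun u : Fin p => u < w) := by
      intro u hu
      simp only [Finset.mem_insert, Finset.mem_filter, Finset.mem_univ, true_and] at hu ⊢
      rcases hu with rfl | h
      · exact hvw
      · exact h.trans hvw
    calc ∑ u ∈ Finset.univ.filter (fun u : Fin p => u < v), x u + x v
        = ∑ u ∈ insert v (Finset.univ.filter (fun u : Fin p => u < v)), x u := by
          rw [Finset.sum_insert hnot]; ring
      _ ≤ _ := Finset.sum_le_sum_of_subset hsub
  have htot : ∀ v : Fin p, y v + x v ≤ ∑ u, x u := by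
    intro v
    rw [hy]
    have hnot : v ∉ Finset.univ.filter (fun u : Fin p => u < v) := by simp
    calc ∑ u ∈ Finset.univ.filter (fun u : Fin p => u < v), x u + x v
        = ∑ u ∈ insert v (Finset.univ.filter (fun u : Fin p => u < v)), x u := by
          rw [Finset.sum_insert hnot]; ring
      _ ≤ _ := Finset.sum_le_sum_of_subset (Finset.subset_univ _)
  refine ⟨?_, ?_, ?_⟩
  · intro w
    set S := ∑ v, x v with hS
    set T : Fin p → Finset ℕ :=
      fun v => (Finset.Icc 1 (x v)).filter fun i => (i + y v) % p = w.val with hT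
    have himg : ∀ v : Fin p, (T v).image (· + y v) ⊆ Finset.Icc (y v + 1) (y v + x v) := by
      intro v m hm
      simp only [Finset.mem_image, hT, Finset.mem_filter, Finset.mem_Icc] at hm
      obtain ⟨i, ⟨⟨h1, h2⟩, _⟩, rfl⟩ := hm
      simp only [Finset.mem_Icc]
      omega
    have hdisj : ∀ a ∈ (Finset.univ : Finset (Fin p)), ∀ b ∈ (Finset.univ : Finset (Fin p)),
        a ≠ b → Disjoint ((T a).image (· + y a)) ((T b).image (· + y b)) := by
      intro a _ b _ hab
      have key : ∀ u v : Fin p, u < v →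
          Disjoint ((T u).image (· + y u)) ((T v).image (· + y v)) := by
        intro u v huv
        apply Finset.disjoint_left.mpr
        intro m hmu hmv
        have h1 := himg u hmu
        have h2 := himg v hmv
        simp only [Finset.mem_Icc] at h1 h2
        have := hmono u v huv
        omega
      rcases lt_or_gt_of_ne hab with h | h
      · exact key a b h
      · exact (key b a h).symm
    have hcard : ∑ v, (T v).card
        = (Finset.univ.biUnion (fun v => (T v).image (· + y v))).card := by
      rw [Finset.card_biUnion hdisj]
      congr 1
      ext v
      exact (Finset.card_image_of_injective _ (add_left_injective (y v))).symm
    have hsub : Finset.univ.biUnion (fun v => (T v).image (· + y v))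
        ⊆ (Finset.Icc 1 S).filter fun m => (m + 0) % p = w.val := by
      intro m hm
      simp only [Finset.mem_biUnion] at hm
      obtain ⟨v, _, hmv⟩ := hm
      have hI := himg v hmv
      simp only [Finset.mem_image, hT, Finset.mem_filter, Finset.mem_Icc] at hmv
      obtain ⟨i, ⟨⟨h1, h2⟩, h3⟩, rfl⟩ := hmv
      simp only [Finset.mem_filter, Finset.mem_Icc, Nat.add_zero]
      have := htot v
      refine ⟨⟨by omega, by omega⟩, h3⟩
    calc ∑ v, (T v).card
        = (Finset.univ.biUnion (fun v => (T v).image (· + y v))).card := hcard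
      _ ≤ ((Finset.Icc 1 S).filter fun m => (m + 0) % p = w.val).card :=
          Finset.card_le_card hsub
      _ ≤ (S + p - 1) / p := count_residue_le p S 0 w.val hp
  · intro v w
    exact count_residue_le p (x v) (y v) w.val hp
  · intro hx v w
    have := count_residue_le p (x v) (y v) w.val hp
    have h2 : (x v + p - 1) / p ≤ 1 := by
      have : (x v + p - 1) / p < 2 := (Nat.div_lt_iff_lt_mul hp).mpr (by have := hx v; omega)
      omega
    omega
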